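/- arXiv:0705.4532 — 4 statements merged into one kernel-verified Lean document; each statement's English description precedes it below -/
import Mathlib

section
/- Let h: L → M and g: N → M be morphisms of differential graded Lie algebras over ℂ. Then the Maurer–Cartan functor MC_{(h,g)} is homogeneous: for every pair of morphisms B → A and C → A of local Artinian ℂ-algebras with residue field ℂ such that the fiber product B ×_A C is again local Artinian, the natural map MC_{(h,g)}(B ×_A C) → MC_{(h,g)}(B) ×_{MC_{(h,g)}(A)} MC_{(h,g)}(C) is bijective. -/
noncomputable section

open TensorProduct

/-- Raw graded Lie data: a `ℤ`-graded complex vector space with a degree-one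
differential and a degree-zero bracket (no axioms). -/
structure GLD where
  V : ℤ → Type
  [grp : ∀ i, AddCommGroup (V i)]
  [mod : ∀ i, Module ℂ (V i)]
  d : ∀ i, V i → V (i + 1)
  br : ∀ i j, V i → V j → V (i + j)

attribute [instance] GLD.grp GLD.mod

namespace GLD

/-- Transport along an equality of degrees. -/
def tr (L : GLD) {i j : ℤ} (h : i = j) (x : L.V i) : L.V j := h ▸ x

/-- The Maurer-Cartan equation in degree one: `dx + ½[x,x] = 0`. -/
def MC1 (L : GLD) (x : L.V 1) : Prop :=
  L.d 1 x + (2 : ℂ)⁻¹ • L.br 1 1 x x = 0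

/-- The adjoint action of a degree-zero element on degree one. -/
def ad01 (L : GLD) (a : L.V 0) (x : L.V 1) : L.V 1 := L.tr (by omega) (L.br 0 1 a x)

/-- The adjoint action of a degree-zero element on degree zero. -/
def ad00 (L : GLD) (a : L.V 0) (x : L.V 0) : L.V 0 := L.tr (by omega) (L.br 0 0 a x)

/-- The gauge action `e^a * x = x + Σ_{n≥0} ad_a^n/(n+1)! ([a,x] - da)`. -/
def gauge (L : GLD) (a : L.V 0) (x : L.V 1) : L.V 1 :=
  x + ∑ᶠ n : ℕ, (((n+1).factorial : ℂ))⁻¹ •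
    (L.ad01 a)^[n] (L.ad01 a x - L.tr (by omega) (L.d 0 a))

/-- Right-nested bracket of a word in two degree-zero letters `x` (true) and `y` (false). -/
def nest (L : GLD) (x y : L.V 0) : List Bool → L.V 0
  | [] => 0
  | [b] => if b then x else y
  | b :: (c :: rest) => L.ad00 (if b then x else y) (L.nest x y (c :: rest))

end GLD

/-- The word `x^{r₁} y^{s₁} ⋯ x^{r_n} y^{s_n}` encoded as a list of booleans. -/
def bchWord (P : List (ℕ × ℕ)) : List Bool :=
  P.flatMap fun p => List.replicate p.1 true ++ List.replicate p.2 false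

open Classical in
/-- The coefficient in Dynkin's formula for the Baker-Campbell-Hausdorff series. -/
def bchCoeff (P : List (ℕ × ℕ)) : ℂ :=
  if P = [] ∨ ¬ (∀ p ∈ P, 0 < p.1 + p.2) then 0 else
    (-1 : ℂ) ^ (P.length - 1) / (P.length : ℂ) *
      ((((P.map fun p => p.1 + p.2).sum : ℕ) : ℂ) *
        (((P.map fun p => (p.1.factorial * p.2.factorial : ℕ)).prod : ℕ) : ℂ))⁻¹

/-- The Baker-Campbell-Hausdorff product on degree-zero elements, via Dynkin's formula. -/
def GLD.bch (L : GLD) (x y : L.V 0) : L.V 0 :=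
  ∑ᶠ P : List (ℕ × ℕ), bchCoeff P • L.nest x y (bchWord P)

/-- Differential graded Lie algebra over `ℂ`. -/
structure DGLA extends GLD where
  d_add : ∀ i (x y : V i), d i (x + y) = d i x + d i y
  d_smul : ∀ i (c : ℂ) (x : V i), d i (c • x) = c • d i x
  br_add_left : ∀ i j (x x' : V i) (y : V j), br i j (x + x') y = br i j x y + br i j x' y
  br_smul_left : ∀ i j (c : ℂ) (x : V i) (y : V j), br i j (c • x) y = c • br i j x y
  br_add_right : ∀ i j (x : V i) (y y' : V j), br i j x (y + y') = br i j x y + br i j x y'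
  br_smul_right : ∀ i j (c : ℂ) (x : V i) (y : V j), br i j x (c • y) = c • br i j x y
  d_sq : ∀ i (x : V i), d (i + 1) (d i x) = 0
  antisym : ∀ i j (x : V i) (y : V j),
    br i j x y = - toGLD.tr (by omega) (((Int.negOnePow (i * j) : ℤˣ) : ℤ) • br j i y x)
  leibniz : ∀ i j (x : V i) (y : V j),
    d (i + j) (br i j x y) =
      toGLD.tr (by omega) (br (i + 1) j (d i x) y) +
        ((Int.negOnePow i : ℤˣ) : ℤ) • toGLD.tr (by omega) (br i (j + 1) x (d j y))
  jacobi : ∀ i j k (x : V i) (y : V j) (z : V k),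
    br i (j + k) x (br j k y z) =
      toGLD.tr (by omega) (br (i + j) k (br i j x y) z) +
        ((Int.negOnePow (i * j) : ℤˣ) : ℤ) • toGLD.tr (by omega) (br j (i + k) y (br i k x z))

namespace DGLA

/-- The differential as a linear map. -/
def dLin (L : DGLA) (i : ℤ) : L.V i →ₗ[ℂ] L.V (i + 1) :=
  { toFun := L.d i, map_add' := L.d_add i, map_smul' := L.d_smul i }

/-- The bracket as a bilinear map. -/
def brLin (L : DGLA) (i j : ℤ) : L.V i →ₗ[ℂ] L.V j →ₗ[ℂ] L.V (i + j) :=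
  LinearMap.mk₂ ℂ (L.br i j) (L.br_add_left i j) (fun c x y => L.br_smul_left i j c x y)
    (L.br_add_right i j) (fun c x y => L.br_smul_right i j c x y)

end DGLA

/-- Morphism of (differential) graded Lie algebras (data-level). -/
structure GLDHom (L M : GLD) where
  f : ∀ i, L.V i → M.V i
  f_add : ∀ i (x y : L.V i), f i (x + y) = f i x + f i y
  f_smul : ∀ i (c : ℂ) (x : L.V i), f i (c • x) = c • f i x
  f_d : ∀ i (x : L.V i), f (i + 1) (L.d i x) = M.d i (f i x)
  f_br : ∀ i j (x : L.V i) (y : L.V j), f (i + j) (L.br i j x y) = M.br i j (f i x) (f j y)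

/-- The components of a morphism as linear maps. -/
def GLDHom.lin {L M : GLD} (h : GLDHom L M) (i : ℤ) : L.V i →ₗ[ℂ] M.V i :=
  { toFun := h.f i, map_add' := h.f_add i, map_smul' := h.f_smul i }

section ArtinBase

variable (A : Type) [CommRing A] [Algebra ℂ A] [IsLocalRing A]

/-- The maximal ideal of a local `ℂ`-algebra. -/
abbrev mA : Ideal A := IsLocalRing.maximalIdeal A

/-- Multiplication of the maximal ideal, as a `ℂ`-bilinear map. -/
def mMul : (mA A) →ₗ[ℂ] (mA A) →ₗ[ℂ] (mA A) :=
  LinearMap.mk₂ ℂ (fun x y => ⟨x.1 * y.1, Ideal.mul_mem_left _ _ y.2⟩)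
    (fun x x' y => by ext; simp [add_mul])
    (fun c x y => by ext; simp [smul_mul_assoc])
    (fun x y y' => by ext; simp [mul_add])
    (fun c x y => by ext; simp [mul_smul_comm])

/-- For a DGLA `L`, the graded Lie data on `L ⊗ m_A`. -/
def DGLA.ten (L : DGLA) : GLD where
  V i := L.V i ⊗[ℂ] (mA A)
  d i := fun x => LinearMap.rTensor (mA A) (L.dLin i) x
  br i j := fun x y =>
    TensorProduct.curry
      ((TensorProduct.map (TensorProduct.lift (L.brLin i j)) (TensorProduct.lift (mMul A)))
        ∘ₗ (TensorProduct.tensorTensorTensorComm ℂ (L.V i) (mA A) (L.V j) (mA A)).toLinearMap)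
      x y

end ArtinBase
namespace GLD

/-- Polynomial differential forms `W[t,dt]`:
in degree `n` an element is `(p, q)` representing `Σᵢ pᵢ tⁱ + Σᵢ qᵢ tⁱ dt`,
with `pᵢ ∈ W^n` and `qᵢ ∈ W^{n-1}`. -/
def tdt (W : GLD) : GLD where
  V n := (ℕ →₀ W.V n) × (ℕ →₀ W.V (n - 1))
  d n x :=
    (x.1.sum fun i v => Finsupp.single i (W.d n v),
      (x.2.sum fun i v => Finsupp.single i (W.tr (by omega) (W.d (n - 1) v))) +
        ((Int.negOnePow n : ℤˣ) : ℤ) •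
          x.1.sum fun i v => Finsupp.single (i - 1) ((i : ℂ) • W.tr (by omega) v))
  br n m x y :=
    (x.1.sum fun i v => y.1.sum fun j w => Finsupp.single (i + j) (W.br n m v w),
      (x.1.sum fun i v => y.2.sum fun j w =>
          Finsupp.single (i + j) (W.tr (by omega) (W.br n (m - 1) v w))) +
        ((Int.negOnePow m : ℤˣ) : ℤ) •
          x.2.sum fun i v => y.1.sum fun j w =>
            Finsupp.single (i + j) (W.tr (by omega) (W.br (n - 1) m v w)))

/-- Evaluation `e_a : W[t,dt] → W` at a point `a ∈ ℂ`. -/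
def evalT (W : GLD) (a : ℂ) (n : ℤ) (x : (W.tdt).V n) : W.V n :=
  x.1.sum fun i v => (a ^ i) • v

/-- The inclusion `W → W[t,dt]` of constant polynomials. -/
def constT (W : GLD) (n : ℤ) (v : W.V n) : (W.tdt).V n :=
  (Finsupp.single 0 v, 0)

/-- The integral operator `∫₀¹ : W[t,dt] → W` of degree `-1`. -/
def int01 (W : GLD) (n : ℤ) (x : (W.tdt).V n) : W.V (n - 1) :=
  x.2.sum fun i v => (((i : ℂ) + 1))⁻¹ • v

/-- The integral operator `∫₀ᵗ`, returning the polynomial primitive of the `dt`-part. -/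
def int0t (W : GLD) (n : ℤ) (x : (W.tdt).V n) : ℕ →₀ W.V (n - 1) :=
  x.2.sum fun i v => Finsupp.single (i + 1) ((((i : ℂ) + 1))⁻¹ • v)

/-- The standard homotopy `K(m(t,dt)) = t∫₀¹ m − ∫₀ᵗ m` on `W[t,dt]`, of degree `-1`. -/
def Ktdt (W : GLD) (n : ℤ) (x : (W.tdt).V n) : (W.tdt).V (n - 1) :=
  (Finsupp.single 1 (W.int01 n x) - W.int0t n x, 0)

/-- A degreewise map between graded objects is a quasi-isomorphism: elementwise,
it induces a bijection on cohomology in every degree. -/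
def IsQuasiIso (L M : GLD) (f : ∀ i, L.V i → M.V i) : Prop :=
  ∀ i : ℤ,
    (∀ x : M.V i, M.d i x = 0 →
      ∃ y : L.V i, L.d i y = 0 ∧ ∃ z : M.V (i - 1), x = f i y + M.tr (by omega) (M.d (i - 1) z)) ∧
    (∀ y : L.V i, L.d i y = 0 →
      (∃ z : M.V (i - 1), f i y = M.tr (by omega) (M.d (i - 1) z)) →
      ∃ w : L.V (i - 1), y = L.tr (by omega) (L.d (i - 1) w))

/-- Extension of a degreewise map to polynomial differential forms, coefficientwise. -/
def tdtMap {W W' : GLD} (f : ∀ i, W.V i → W'.V i) (n : ℤ) (x : (W.tdt).V n) : (W'.tdt).V n :=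
  (x.1.sum fun i v => Finsupp.single i (f n v),
   x.2.sum fun i v => Finsupp.single i (f (n - 1) v))

end GLD

section Pair

variable (L M N : DGLA) (h : GLDHom L.toGLD M.toGLD) (g : GLDHom N.toGLD M.toGLD)
variable (A : Type) [CommRing A] [Algebra ℂ A] [IsLocalRing A]

/-- The space of triples `(x, y, p) ∈ (L¹ ⊗ m_A) × (N¹ ⊗ m_A) × (M⁰ ⊗ m_A)`;
the element `p` stands for the exponential `e^p ∈ exp(M⁰ ⊗ m_A)`. -/
abbrev TripleSp := ((L.ten A).V 1) × ((N.ten A).V 1) × ((M.ten A).V 0)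

/-- Extension `h ⊗ id` of a morphism to coefficients in `m_A`. -/
def hTen (i : ℤ) : (L.ten A).V i → (M.ten A).V i :=
  fun x => LinearMap.rTensor (mA A) (h.lin i) x

/-- Extension `g ⊗ id` of a morphism to coefficients in `m_A`. -/
def gTen (i : ℤ) : (N.ten A).V i → (M.ten A).V i :=
  fun x => LinearMap.rTensor (mA A) (g.lin i) x

/-- The Maurer-Cartan set `MC_{(h,g)}(A)`: triples `(x, y, e^p)` with
`dx + ½[x,x] = 0`, `dy + ½[y,y] = 0` and `g(y) = e^p * h(x)`. -/
def MCset : Set (TripleSp L M N A) :=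
  {w | (L.ten A).MC1 w.1 ∧ (N.ten A).MC1 w.2.1 ∧
    gTen M N g A 1 w.2.1 = (M.ten A).gauge w.2.2 (hTen L M h A 1 w.1)}

/-- The gauge relation on `MC_{(h,g)}(A)`: `(x₁,y₁,e^{p₁}) ∼ (x₂,y₂,e^{p₂})` iff there are
`a ∈ L⁰ ⊗ m_A`, `b ∈ N⁰ ⊗ m_A`, `c ∈ M⁻¹ ⊗ m_A` with `x₂ = e^a * x₁`, `y₂ = e^b * y₁` and
`e^{p₂} = e^{g(b)} e^T e^{p₁} e^{−h(a)}`, where `T = dc + [g(y₁), c]` and the products of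
exponentials are computed by the Baker-Campbell-Hausdorff formula. -/
def gaugeRel (w w' : TripleSp L M N A) : Prop :=
  ∃ (a : (L.ten A).V 0) (b : (N.ten A).V 0) (c : (M.ten A).V (-1)),
    w'.1 = (L.ten A).gauge a w.1 ∧
    w'.2.1 = (N.ten A).gauge b w.2.1 ∧
    w'.2.2 = (M.ten A).bch (gTen M N g A 0 b)
      ((M.ten A).bch
        ((M.ten A).tr (show (-1:ℤ)+1 = 0 by omega) ((M.ten A).d (-1) c) +
          (M.ten A).tr (show (1:ℤ)+(-1) = 0 by omega)
            ((M.ten A).br 1 (-1) (gTen M N g A 1 w.2.1) c))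
        ((M.ten A).bch w.2.2 (- hTen L M h A 0 a)))

end Pair

section Push

variable {B A : Type} [CommRing B] [Algebra ℂ B] [IsLocalRing B]
  [CommRing A] [Algebra ℂ A] [IsLocalRing A]

/-- Restriction of a `ℂ`-algebra morphism to the maximal ideals, as a `ℂ`-linear map. -/
def mRes (φ : B →ₐ[ℂ] A) (hφ : ∀ x : mA B, φ x.1 ∈ mA A) : (mA B) →ₗ[ℂ] (mA A) where
  toFun := fun x => ⟨φ x.1, hφ x⟩
  map_add' := by intro x y; ext; simp
  map_smul' := by intro c x; ext; simp [Algebra.smul_def]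

/-- Pushforward `L ⊗ m_B → L ⊗ m_A` along a morphism of local `ℂ`-algebras. -/
def pushV (L : DGLA) (φ : B →ₐ[ℂ] A) (hφ : ∀ x : mA B, φ x.1 ∈ mA A) (i : ℤ) :
    (L.ten B).V i → (L.ten A).V i :=
  fun x => LinearMap.lTensor (L.V i) (mRes φ hφ) x

/-- Pushforward of Maurer-Cartan triples along a morphism of local `ℂ`-algebras. -/
def pushTriple (L M N : DGLA) (φ : B →ₐ[ℂ] A) (hφ : ∀ x : mA B, φ x.1 ∈ mA A)
    (w : TripleSp L M N B) : TripleSp L M N A :=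
  (pushV L φ hφ 1 w.1, pushV N φ hφ 1 w.2.1, pushV M φ hφ 0 w.2.2)

end Push

section S1

variable (B C A : Type) [CommRing B] [Algebra ℂ B] [IsLocalRing B] [IsArtinianRing B]
  [CommRing C] [Algebra ℂ C] [IsLocalRing C] [IsArtinianRing C]
  [CommRing A] [Algebra ℂ A] [IsLocalRing A] [IsArtinianRing A]

/-- The fiber product `B ×_A C` of `ℂ`-algebras, as a subalgebra of `B × C`. -/
def fiberProd (f : B →ₐ[ℂ] A) (g' : C →ₐ[ℂ] A) : Subalgebra ℂ (B × C) :=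
  AlgHom.equalizer (f.comp (AlgHom.fst ℂ B C)) (g'.comp (AlgHom.snd ℂ B C))

/-- The projection `B ×_A C → B`. -/
def fpFst (f : B →ₐ[ℂ] A) (g' : C →ₐ[ℂ] A) : (fiberProd B C A f g') →ₐ[ℂ] B :=
  (AlgHom.fst ℂ B C).comp (fiberProd B C A f g').val

/-- The projection `B ×_A C → C`. -/
def fpSnd (f : B →ₐ[ℂ] A) (g' : C →ₐ[ℂ] A) : (fiberProd B C A f g') →ₐ[ℂ] C :=
  (AlgHom.snd ℂ B C).comp (fiberProd B C A f g').val

end S1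

/-!
Everything in `MC_{(h,g)}(A)` depends on `A` only through the vector spaces `V ⊗ m_A`, and
functorially so: pushing forward along `m_B → m_A` commutes with the differential, the bracket,
the morphisms `h`, `g` and, since nilpotency of `m_B` makes the gauge series a finite sum, with
the gauge action. The maximal ideal of `B ×_A C` is the pullback `m_B ×_{m_A} m_C` of vector
spaces, and tensoring with a flat module keeps `0 → P → M₁ × M₂ → M` exact, so it preserves
pullbacks. Hence triples over `B ×_A C` are exactly the compatible pairs of triples over `B` and
`C`; as the two pushforwards are jointly injective, the Maurer-Cartan and gauge equations hold
over `B ×_A C` as soon as they hold over `B` and over `C`.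
-/

section Pullback

variable {R P M₁ M₂ M : Type*} [CommRing R] [AddCommGroup P] [Module R P]
  [AddCommGroup M₁] [Module R M₁] [AddCommGroup M₂] [Module R M₂] [AddCommGroup M] [Module R M]
  {ρ₁ : P →ₗ[R] M₁} {ρ₂ : P →ₗ[R] M₂} {δ₁ : M₁ →ₗ[R] M} {δ₂ : M₂ →ₗ[R] M}

structure IsLinearPullback (ρ₁ : P →ₗ[R] M₁) (ρ₂ : P →ₗ[R] M₂) (δ₁ : M₁ →ₗ[R] M)
    (δ₂ : M₂ →ₗ[R] M) : Prop where
  injective : Function.Injective (ρ₁.prod ρ₂)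
  exact : Function.Exact (ρ₁.prod ρ₂) (δ₁.coprod (-δ₂))

namespace IsLinearPullback

theorem of_forall (comm : ∀ p, δ₁ (ρ₁ p) = δ₂ (ρ₂ p))
    (inj : ∀ x y, ρ₁ x = ρ₁ y → ρ₂ x = ρ₂ y → x = y)
    (exists_of_eq : ∀ b c, δ₁ b = δ₂ c → ∃ p, ρ₁ p = b ∧ ρ₂ p = c) :
    IsLinearPullback ρ₁ ρ₂ δ₁ δ₂ where
  injective x y hxy := inj x y congr($hxy.1) congr($hxy.2)
  exact := by
    rintro ⟨b, c⟩
    simp only [LinearMap.coprod_apply, LinearMap.neg_apply, ← sub_eq_add_neg, sub_eq_zero,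
      Set.mem_range, LinearMap.prod_apply, Prod.ext_iff]
    exact ⟨exists_of_eq b c, fun ⟨p, hb, hc⟩ => hb ▸ hc ▸ comm p⟩

theorem comm (H : IsLinearPullback ρ₁ ρ₂ δ₁ δ₂) (p : P) : δ₁ (ρ₁ p) = δ₂ (ρ₂ p) := by
  simpa [sub_eq_zero, ← sub_eq_add_neg] using H.exact.apply_apply_eq_zero p

theorem exists_of_eq (H : IsLinearPullback ρ₁ ρ₂ δ₁ δ₂) {b : M₁} {c : M₂} (h : δ₁ b = δ₂ c) :
    ∃ p, ρ₁ p = b ∧ ρ₂ p = c := by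
  obtain ⟨p, hp⟩ := (H.exact (b, c)).mp (by simp [h])
  exact ⟨p, congr($hp.1), congr($hp.2)⟩

theorem lTensor_prod_injective (V : Type*) [AddCommGroup V] [Module R V] [Module.Flat R V]
    (h : Function.Injective (ρ₁.prod ρ₂)) :
    Function.Injective ((ρ₁.lTensor V).prod (ρ₂.lTensor V)) := by
  have hprod : (ρ₁.lTensor V).prod (ρ₂.lTensor V) =
      (prodRight R R V M₁ M₂).toLinearMap ∘ₗ (ρ₁.prod ρ₂).lTensor V :=
    TensorProduct.ext' fun v p => by simp
  rw [hprod]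
  exact (prodRight R R V M₁ M₂).injective.comp
    (Module.Flat.lTensor_preserves_injective_linearMap _ h)

theorem lTensor (H : IsLinearPullback ρ₁ ρ₂ δ₁ δ₂) (V : Type*) [AddCommGroup V] [Module R V]
    [Module.Flat R V] :
    IsLinearPullback (ρ₁.lTensor V) (ρ₂.lTensor V) (δ₁.lTensor V) (δ₂.lTensor V) where
  injective := lTensor_prod_injective V H.injective
  exact := Function.Exact.of_ladder_linearEquiv_of_exact (e₁ := .refl R _)
    (e₂ := prodRight R R V M₁ M₂) (e₃ := .refl R _) (f₁₂ := (ρ₁.prod ρ₂).lTensor V)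
    (f₂₃ := (δ₁.coprod (-δ₂)).lTensor V)
    (TensorProduct.ext' fun v p => by simp)
    (TensorProduct.ext' fun v p => by simp [tmul_add, tmul_neg])
    (Module.Flat.lTensor_exact V H.exact)

end IsLinearPullback

end Pullback

section Coefficients

variable (A : Type) [CommRing A] [Algebra ℂ A] [IsLocalRing A]

/-- The bracket `(L.ten A).br i j`, bundled as a bilinear map (the two agree definitionally). -/
def DGLA.tenBr (L : DGLA) (i j : ℤ) :
    L.V i ⊗[ℂ] mA A →ₗ[ℂ] L.V j ⊗[ℂ] mA A →ₗ[ℂ] L.V (i + j) ⊗[ℂ] mA A :=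
  TensorProduct.curry
    ((TensorProduct.map (TensorProduct.lift (L.brLin i j)) (TensorProduct.lift (mMul A)))
      ∘ₗ (TensorProduct.tensorTensorTensorComm ℂ (L.V i) (mA A) (L.V j) (mA A)).toLinearMap)

def tensorMaxIdealPow (V : Type) [AddCommGroup V] [Module ℂ V] (n : ℕ) :
    Submodule ℂ (V ⊗[ℂ] mA A) :=
  Submodule.span ℂ {t | ∃ (v : V) (a : mA A), (a : A) ∈ mA A ^ n ∧ t = v ⊗ₜ a}

variable {A}

theorem DGLA.tenBr_tmul (L : DGLA) (i j : ℤ) (v : L.V i) (w : L.V j) (a b : mA A) :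
    L.tenBr A i j (v ⊗ₜ a) (w ⊗ₜ b) = L.br i j v w ⊗ₜ mMul A a b := by
  simp [DGLA.tenBr, DGLA.brLin, mMul]

variable {V : Type} [AddCommGroup V] [Module ℂ V]

theorem mem_tensorMaxIdealPow_one (x : V ⊗[ℂ] mA A) : x ∈ tensorMaxIdealPow A V 1 := by
  refine Submodule.span_mono ?_ (TensorProduct.span_tmul_eq_top ℂ V (mA A) ▸ Submodule.mem_top)
  rintro _ ⟨v, a, rfl⟩
  exact ⟨v, a, by simp, rfl⟩

theorem tensorMaxIdealPow_antitone : Antitone (tensorMaxIdealPow A V) := by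
  intro m n hmn
  refine Submodule.span_mono ?_
  rintro _ ⟨v, a, ha, rfl⟩
  exact ⟨v, a, Ideal.pow_le_pow_right hmn ha, rfl⟩

theorem tensorMaxIdealPow_eq_bot {K : ℕ} (hK : mA A ^ K = ⊥) :
    tensorMaxIdealPow A V K = ⊥ := by
  rw [eq_bot_iff, tensorMaxIdealPow, Submodule.span_le]
  rintro _ ⟨v, a, ha, rfl⟩
  rw [hK, Ideal.mem_bot, ZeroMemClass.coe_eq_zero] at ha
  simp [ha]

theorem DGLA.tr_mem_tensorMaxIdealPow (L : DGLA) {i j : ℤ} (h : i = j) {n : ℕ}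
    {x : (L.ten A).V i} (hx : x ∈ tensorMaxIdealPow A (L.V i) n) :
    (L.ten A).tr h x ∈ tensorMaxIdealPow A (L.V j) n := by
  subst h; exact hx

theorem DGLA.br_mem_tensorMaxIdealPow (L : DGLA) {i j : ℤ} {m n : ℕ} {x : (L.ten A).V i}
    {y : (L.ten A).V j} (hx : x ∈ tensorMaxIdealPow A (L.V i) m)
    (hy : y ∈ tensorMaxIdealPow A (L.V j) n) :
    (L.ten A).br i j x y ∈ tensorMaxIdealPow A (L.V (i + j)) (m + n) := by
  have hle : Submodule.map₂ (L.tenBr A i j) (tensorMaxIdealPow A (L.V i) m)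
      (tensorMaxIdealPow A (L.V j) n) ≤ tensorMaxIdealPow A (L.V (i + j)) (m + n) := by
    rw [tensorMaxIdealPow, tensorMaxIdealPow, Submodule.map₂_span_span, Submodule.span_le]
    rintro _ ⟨_, ⟨v, a, ha, rfl⟩, _, ⟨w, b, hb, rfl⟩, rfl⟩
    refine Submodule.subset_span ⟨_, _, ?_, L.tenBr_tmul i j v w a b⟩
    exact pow_add (mA A) m n ▸ Ideal.mul_mem_mul ha hb
  exact hle (Submodule.apply_mem_map₂ _ hx hy)

theorem DGLA.ad01_iterate_mem_tensorMaxIdealPow (L : DGLA) (a : (L.ten A).V 0)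
    (x : (L.ten A).V 1) (n : ℕ) :
    ((L.ten A).ad01 a)^[n] x ∈ tensorMaxIdealPow A (L.V 1) (n + 1) := by
  induction n with
  | zero => exact mem_tensorMaxIdealPow_one x
  | succ n ih =>
    rw [Function.iterate_succ_apply', show n + 1 + 1 = 1 + (n + 1) by omega]
    exact L.tr_mem_tensorMaxIdealPow _
      (L.br_mem_tensorMaxIdealPow (mem_tensorMaxIdealPow_one a) ih)

theorem DGLA.gauge_support_finite [IsArtinianRing A] (L : DGLA) (a : (L.ten A).V 0)
    (x : (L.ten A).V 1) :
    (Function.support fun n : ℕ =>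
      (((n + 1).factorial : ℂ))⁻¹ • ((L.ten A).ad01 a)^[n] x).Finite := by
  obtain ⟨K, hK⟩ : IsNilpotent (IsLocalRing.maximalIdeal A) := by
    rw [← IsLocalRing.jacobson_eq_maximalIdeal ⊥ bot_ne_top]
    exact IsArtinianRing.isNilpotent_jacobson_bot
  refine (Set.finite_Iio K).subset fun n hn => ?_
  by_contra hKn
  have hmem := tensorMaxIdealPow_antitone (show K ≤ n + 1 by simp at hKn; omega)
    (L.ad01_iterate_mem_tensorMaxIdealPow a x n)
  rw [tensorMaxIdealPow_eq_bot hK] at hmem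
  have hzero : ((L.ten A).ad01 a)^[n] x = (0 : (L.ten A).V 1) := (Submodule.mem_bot ℂ).mp hmem
  exact hn (by beta_reduce; rw [hzero, smul_zero])

end Coefficients

theorem LinearMap.lTensor_rTensor_apply {R M N P Q : Type*} [CommSemiring R] [AddCommMonoid M]
    [Module R M] [AddCommMonoid N] [Module R N] [AddCommMonoid P] [Module R P] [AddCommMonoid Q]
    [Module R Q] (f : M →ₗ[R] P) (g : N →ₗ[R] Q) (x : M ⊗[R] N) :
    g.lTensor P (f.rTensor N x) = f.rTensor Q (g.lTensor M x) := by
  rw [← LinearMap.comp_apply, LinearMap.lTensor_comp_rTensor, ← LinearMap.rTensor_comp_lTensor,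
    LinearMap.comp_apply]

def GLD.curvature (L : GLD) (x : L.V 1) : L.V (1 + 1) :=
  L.d 1 x + (2 : ℂ)⁻¹ • L.br 1 1 x x

section Pushforward

variable {B A : Type} [CommRing B] [Algebra ℂ B] [IsLocalRing B]
  [CommRing A] [Algebra ℂ A] [IsLocalRing A]
  (L : DGLA) (φ : B →ₐ[ℂ] A) (hφ : ∀ x : mA B, φ x.1 ∈ mA A)

theorem mRes_mMul (a b : mA B) :
    mRes φ hφ (mMul B a b) = mMul A (mRes φ hφ a) (mRes φ hφ b) :=
  Subtype.ext (map_mul φ a.1 b.1)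

theorem pushV_zero (i : ℤ) : pushV L φ hφ i 0 = 0 := map_zero _

theorem pushV_add (i : ℤ) (x y : (L.ten B).V i) :
    pushV L φ hφ i (x + y) = pushV L φ hφ i x + pushV L φ hφ i y := map_add _ _ _

theorem pushV_sub (i : ℤ) (x y : (L.ten B).V i) :
    pushV L φ hφ i (x - y) = pushV L φ hφ i x - pushV L φ hφ i y := map_sub _ _ _

theorem pushV_smul (i : ℤ) (c : ℂ) (x : (L.ten B).V i) :
    pushV L φ hφ i (c • x) = c • pushV L φ hφ i x := map_smul _ _ _

theorem pushV_tr {i j : ℤ} (h : i = j) (x : (L.ten B).V i) :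
    pushV L φ hφ j ((L.ten B).tr h x) = (L.ten A).tr h (pushV L φ hφ i x) := by
  subst h; rfl

theorem pushV_d (i : ℤ) (x : (L.ten B).V i) :
    pushV L φ hφ (i + 1) ((L.ten B).d i x) = (L.ten A).d i (pushV L φ hφ i x) :=
  LinearMap.lTensor_rTensor_apply _ _ x

theorem pushV_br (i j : ℤ) (x : (L.ten B).V i) (y : (L.ten B).V j) :
    pushV L φ hφ (i + j) ((L.ten B).br i j x y)
      = (L.ten A).br i j (pushV L φ hφ i x) (pushV L φ hφ j y) := by
  have h : (L.tenBr B i j).compr₂ ((mRes φ hφ).lTensor _)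
      = (L.tenBr A i j).compl₁₂ ((mRes φ hφ).lTensor _) ((mRes φ hφ).lTensor _) :=
    TensorProduct.ext' fun v a => TensorProduct.ext' fun w b => by
      simp [DGLA.tenBr_tmul, mRes_mMul]
  exact LinearMap.congr_fun₂ h x y

theorem pushV_hTen (M : DGLA) (h : GLDHom L.toGLD M.toGLD) (i : ℤ) (x : (L.ten B).V i) :
    pushV M φ hφ i (hTen L M h B i x) = hTen L M h A i (pushV L φ hφ i x) :=
  LinearMap.lTensor_rTensor_apply _ _ x

theorem pushV_gTen (M : DGLA) (g : GLDHom L.toGLD M.toGLD) (i : ℤ) (x : (L.ten B).V i) :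
    pushV M φ hφ i (gTen M L g B i x) = gTen M L g A i (pushV L φ hφ i x) :=
  LinearMap.lTensor_rTensor_apply _ _ x

theorem pushV_curvature (x : (L.ten B).V 1) :
    pushV L φ hφ (1 + 1) ((L.ten B).curvature x) = (L.ten A).curvature (pushV L φ hφ 1 x) := by
  rw [GLD.curvature, pushV_add, pushV_d, pushV_smul, pushV_br]; rfl

theorem pushV_iterate_ad01 (a : (L.ten B).V 0) (x : (L.ten B).V 1) (n : ℕ) :
    pushV L φ hφ 1 (((L.ten B).ad01 a)^[n] x)
      = ((L.ten A).ad01 (pushV L φ hφ 0 a))^[n] (pushV L φ hφ 1 x) := by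
  induction n with
  | zero => rfl
  | succ n ih =>
    rw [Function.iterate_succ_apply', Function.iterate_succ_apply', GLD.ad01, GLD.ad01,
      pushV_tr, pushV_br, ih]

theorem pushV_gauge [IsArtinianRing B] (a : (L.ten B).V 0) (x : (L.ten B).V 1) :
    pushV L φ hφ 1 ((L.ten B).gauge a x)
      = (L.ten A).gauge (pushV L φ hφ 0 a) (pushV L φ hφ 1 x) := by
  rw [GLD.gauge, GLD.gauge, pushV_add]
  congr 1
  refine (map_finsum ((mRes φ hφ).lTensor (L.V 1)) (L.gauge_support_finite a _)).trans
    (finsum_congr fun n => ?_)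
  change pushV L φ hφ 1 _ = _
  rw [pushV_smul, pushV_iterate_ad01, pushV_sub, GLD.ad01, GLD.ad01, pushV_tr,
    pushV_br, pushV_tr, pushV_d]

end Pushforward

section Triples

variable {P B C A : Type} [CommRing P] [Algebra ℂ P] [IsLocalRing P]
  [CommRing B] [Algebra ℂ B] [IsLocalRing B] [CommRing C] [Algebra ℂ C] [IsLocalRing C]
  [CommRing A] [Algebra ℂ A] [IsLocalRing A]
  (L M N : DGLA) (h : GLDHom L.toGLD M.toGLD) (g : GLDHom N.toGLD M.toGLD)

theorem pushTriple_mem_MCset [IsArtinianRing B] (φ : B →ₐ[ℂ] A)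
    (hφ : ∀ x : mA B, φ x.1 ∈ mA A) {w : TripleSp L M N B} (hw : w ∈ MCset L M N h g B) :
    pushTriple L M N φ hφ w ∈ MCset L M N h g A := by
  obtain ⟨hx, hy, hp⟩ := hw
  refine ⟨?_, ?_, ?_⟩
  · change (L.ten A).curvature (pushV L φ hφ 1 w.1) = 0
    rw [← pushV_curvature, GLD.curvature, hx, pushV_zero]
  · change (N.ten A).curvature (pushV N φ hφ 1 w.2.1) = 0
    rw [← pushV_curvature, GLD.curvature, hy, pushV_zero]
  · change gTen M N g A 1 (pushV N φ hφ 1 w.2.1) = _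
    rw [← pushV_gTen, hp, pushV_gauge, pushV_hTen]
    rfl

variable {φ₁ : P →ₐ[ℂ] B} {φ₂ : P →ₐ[ℂ] C} {hφ₁ : ∀ x : mA P, φ₁ x.1 ∈ mA B}
  {hφ₂ : ∀ x : mA P, φ₂ x.1 ∈ mA C}

theorem eq_of_pushV_eq (hinj : Function.Injective ((mRes φ₁ hφ₁).prod (mRes φ₂ hφ₂)))
    (X : DGLA) {i : ℤ} {x y : (X.ten P).V i} (h₁ : pushV X φ₁ hφ₁ i x = pushV X φ₁ hφ₁ i y)
    (h₂ : pushV X φ₂ hφ₂ i x = pushV X φ₂ hφ₂ i y) : x = y :=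
  IsLinearPullback.lTensor_prod_injective (X.V i) hinj (Prod.ext h₁ h₂)

theorem pushTriple_injective (hinj : Function.Injective ((mRes φ₁ hφ₁).prod (mRes φ₂ hφ₂))) :
    Function.Injective fun w : TripleSp L M N P =>
      (pushTriple L M N φ₁ hφ₁ w, pushTriple L M N φ₂ hφ₂ w) := fun _ _ h =>
  Prod.ext (eq_of_pushV_eq hinj L congr($h.1.1) congr($h.2.1))
    (Prod.ext (eq_of_pushV_eq hinj N congr($h.1.2.1) congr($h.2.2.1))
      (eq_of_pushV_eq hinj M congr($h.1.2.2) congr($h.2.2.2)))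

theorem mem_MCset_of_pushTriple [IsArtinianRing P]
    (hinj : Function.Injective ((mRes φ₁ hφ₁).prod (mRes φ₂ hφ₂))) {w : TripleSp L M N P}
    (h₁ : pushTriple L M N φ₁ hφ₁ w ∈ MCset L M N h g B)
    (h₂ : pushTriple L M N φ₂ hφ₂ w ∈ MCset L M N h g C) : w ∈ MCset L M N h g P := by
  obtain ⟨hx₁, hy₁, hp₁⟩ := h₁
  obtain ⟨hx₂, hy₂, hp₂⟩ := h₂
  refine ⟨?_, ?_, ?_⟩
  · refine eq_of_pushV_eq hinj L (x := (L.ten P).curvature w.1) (y := 0) ?_ ?_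
    · rw [pushV_curvature, pushV_zero]; exact hx₁
    · rw [pushV_curvature, pushV_zero]; exact hx₂
  · refine eq_of_pushV_eq hinj N (x := (N.ten P).curvature w.2.1) (y := 0) ?_ ?_
    · rw [pushV_curvature, pushV_zero]; exact hy₁
    · rw [pushV_curvature, pushV_zero]; exact hy₂
  · refine eq_of_pushV_eq hinj M ?_ ?_
    · rw [pushV_gTen, pushV_gauge, pushV_hTen]; exact hp₁
    · rw [pushV_gTen, pushV_gauge, pushV_hTen]; exact hp₂

variable {ψ₁ : B →ₐ[ℂ] A} {ψ₂ : C →ₐ[ℂ] A} {hψ₁ : ∀ x : mA B, ψ₁ x.1 ∈ mA A}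
  {hψ₂ : ∀ x : mA C, ψ₂ x.1 ∈ mA A}

theorem IsLinearPullback.pushTriple_comm
    (H : IsLinearPullback (mRes φ₁ hφ₁) (mRes φ₂ hφ₂) (mRes ψ₁ hψ₁) (mRes ψ₂ hψ₂))
    (w : TripleSp L M N P) :
    pushTriple L M N ψ₁ hψ₁ (pushTriple L M N φ₁ hφ₁ w)
      = pushTriple L M N ψ₂ hψ₂ (pushTriple L M N φ₂ hφ₂ w) :=
  Prod.ext ((H.lTensor _).comm w.1)
    (Prod.ext ((H.lTensor _).comm w.2.1) ((H.lTensor _).comm w.2.2))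

theorem IsLinearPullback.exists_pushTriple_eq
    (H : IsLinearPullback (mRes φ₁ hφ₁) (mRes φ₂ hφ₂) (mRes ψ₁ hψ₁) (mRes ψ₂ hψ₂))
    {u : TripleSp L M N B} {v : TripleSp L M N C}
    (huv : pushTriple L M N ψ₁ hψ₁ u = pushTriple L M N ψ₂ hψ₂ v) :
    ∃ w, pushTriple L M N φ₁ hφ₁ w = u ∧ pushTriple L M N φ₂ hφ₂ w = v := by
  obtain ⟨x, hx₁, hx₂⟩ := (H.lTensor (L.V 1)).exists_of_eq congr($huv.1)
  obtain ⟨y, hy₁, hy₂⟩ := (H.lTensor (N.V 1)).exists_of_eq congr($huv.2.1)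
  obtain ⟨p, hp₁, hp₂⟩ := (H.lTensor (M.V 0)).exists_of_eq congr($huv.2.2)
  exact ⟨(x, y, p), Prod.ext hx₁ (Prod.ext hy₁ hp₁), Prod.ext hx₂ (Prod.ext hy₂ hp₂)⟩

end Triples

theorem isLinearPullback_fiberProd {B C A : Type} [CommRing B] [Algebra ℂ B] [IsLocalRing B]
    [CommRing C] [Algebra ℂ C] [IsLocalRing C] [CommRing A] [Algebra ℂ A] [IsLocalRing A]
    (f : B →ₐ[ℂ] A) (g' : C →ₐ[ℂ] A) [IsLocalRing (fiberProd B C A f g')]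
    (hfst : ∀ x : mA (fiberProd B C A f g'), fpFst B C A f g' x.1 ∈ mA B)
    (hsnd : ∀ x : mA (fiberProd B C A f g'), fpSnd B C A f g' x.1 ∈ mA C)
    (hf : ∀ x : mA B, f x.1 ∈ mA A) (hg' : ∀ x : mA C, g' x.1 ∈ mA A) :
    IsLinearPullback (mRes (fpFst B C A f g') hfst) (mRes (fpSnd B C A f g') hsnd)
      (mRes f hf) (mRes g' hg') := by
  refine .of_forall (fun p => Subtype.ext p.1.2)
    (fun x y h₁ h₂ => Subtype.ext (Subtype.ext (Prod.ext congr($h₁.1) congr($h₂.1))))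
    fun b c hbc => ?_
  let q : fiberProd B C A f g' := ⟨(b.1, c.1), congr($hbc.1)⟩
  have hq : q ∈ mA (fiberProd B C A f g') := fun hunit =>
    (IsLocalRing.mem_maximalIdeal _).mp b.2 (hunit.map (fpFst B C A f g'))
  exact ⟨⟨q, hq⟩, rfl, rfl⟩

section S1

variable (B C A : Type) [CommRing B] [Algebra ℂ B] [IsLocalRing B] [IsArtinianRing B]
  [CommRing C] [Algebra ℂ C] [IsLocalRing C] [IsArtinianRing C]
  [CommRing A] [Algebra ℂ A] [IsLocalRing A] [IsArtinianRing A]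

theorem statement1 (L M N : DGLA) (h : GLDHom L.toGLD M.toGLD) (g : GLDHom N.toGLD M.toGLD)
    (f : B →ₐ[ℂ] A) (g' : C →ₐ[ℂ] A)
    (instL : IsLocalRing (fiberProd B C A f g'))
    (instA : IsArtinianRing (fiberProd B C A f g'))
    (hfst : ∀ x : mA (fiberProd B C A f g'), fpFst B C A f g' x.1 ∈ mA B)
    (hsnd : ∀ x : mA (fiberProd B C A f g'), fpSnd B C A f g' x.1 ∈ mA C)
    (hf : ∀ x : mA B, f x.1 ∈ mA A) (hg' : ∀ x : mA C, g' x.1 ∈ mA A) :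
    Set.BijOn
      (fun w => (pushTriple L M N (fpFst B C A f g') hfst w,
                 pushTriple L M N (fpSnd B C A f g') hsnd w))
      (MCset L M N h g (fiberProd B C A f g'))
      {uv : TripleSp L M N B × TripleSp L M N C |
        uv.1 ∈ MCset L M N h g B ∧ uv.2 ∈ MCset L M N h g C ∧
        pushTriple L M N f hf uv.1 = pushTriple L M N g' hg' uv.2} := by
  have H := isLinearPullback_fiberProd f g' hfst hsnd hf hg'
  refine ⟨fun w hw => ⟨pushTriple_mem_MCset L M N h g _ hfst hw,
    pushTriple_mem_MCset L M N h g _ hsnd hw, H.pushTriple_comm L M N w⟩,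
    (pushTriple_injective L M N H.injective).injOn, ?_⟩
  rintro ⟨u, v⟩ ⟨hu, hv, huv⟩
  obtain ⟨w, rfl, rfl⟩ := H.exists_pushTriple_eq L M N huv
  exact ⟨w, mem_MCset_of_pushTriple L M N h g H.injective hu hv, rfl⟩

end S1
end
end

section
/- Define polynomials φ_j(t) ∈ ℚ[t] and rationals I_j recursively by φ₁(t) = t, I_j = ∫₀¹ φ_j(t) dt, and φ_{j+1}(t) = ∫₀^t φ_j(s) ds − t·I_j. Then for every j ≥ 1, I_j = −B_j/j!, where B_j denotes the j-th Bernoulli number (with the convention B₁ = −1/2, i.e., Σ_{n≥0} B_n x^n/n! = x/(e^x − 1)). -/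
noncomputable section

/-- The formal primitive `∫₀ᵗ p` of a polynomial, vanishing at `0`. -/
def pInteg (p : Polynomial ℚ) : Polynomial ℚ :=
  p.sum fun i a => Polynomial.C (a / ((i : ℚ) + 1)) * Polynomial.X ^ (i + 1)

/-- The integral `∫₀¹ p`, i.e. the evaluation at `1` of the primitive vanishing at `0`. -/
def pInt01 (p : Polynomial ℚ) : ℚ := (pInteg p).eval 1

/-- The polynomials `φ_j`: `φ₁(t) = t`, `φ_{j+1}(t) = ∫₀ᵗ φ_j(s) ds − t·∫₀¹ φ_j(s) ds`. -/
def phiP : ℕ → Polynomial ℚ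
  | 0 => 0
  | 1 => Polynomial.X
  | (j + 2) => pInteg (phiP (j + 1)) - Polynomial.C (pInt01 (phiP (j + 1))) * Polynomial.X

open Polynomial in
lemma derivative_pInteg (p : Polynomial ℚ) : derivative (pInteg p) = p := by
  unfold pInteg
  rw [Polynomial.sum, map_sum]
  conv_rhs => rw [← p.sum_C_mul_X_pow_eq, Polynomial.sum]
  refine Finset.sum_congr rfl fun i _ => ?_
  rw [derivative_C_mul, derivative_X_pow]
  rw [show i + 1 - 1 = i from rfl, ← mul_assoc, ← map_mul]
  congr 1
  have hne : (i:ℚ) + 1 ≠ 0 := by positivity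
  push_cast
  field_simp

open Polynomial in
lemma eval_zero_pInteg (p : Polynomial ℚ) : (pInteg p).eval 0 = 0 := by
  unfold pInteg
  rw [Polynomial.sum, eval_finset_sum]
  refine Finset.sum_eq_zero fun i _ => by simp

open Polynomial in
lemma pInteg_unique (p q : Polynomial ℚ) (h1 : derivative q = p) (h0 : q.eval 0 = 0) :
    pInteg p = q := by
  have h : derivative (pInteg p - q) = 0 := by
    rw [derivative_sub, derivative_pInteg, h1, sub_self]
  have hC := Polynomial.eq_C_of_derivative_eq_zero h
  have h2 : (pInteg p - q).eval 0 = 0 := by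
    rw [eval_sub, eval_zero_pInteg, h0, sub_self]
  have h2' : (pInteg p - q).coeff 0 = 0 := by
    rw [hC] at h2; simpa using h2
  have h3 : pInteg p - q = 0 := by rw [hC, h2', map_zero]
  exact sub_eq_zero.mp h3

open Polynomial in
lemma phiP_closed : ∀ j : ℕ, phiP (j + 1) =
    C (((j+1).factorial : ℚ)⁻¹) * (Polynomial.bernoulli (j+1) - C (_root_.bernoulli (j+1))) ∧
    pInteg (phiP (j + 1)) =
      C (((j+2).factorial : ℚ)⁻¹) * (Polynomial.bernoulli (j+2) - C (_root_.bernoulli (j+2)))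
      - C ((((j+1).factorial : ℚ))⁻¹ * _root_.bernoulli (j+1)) * X := by
  have key : ∀ j : ℕ, phiP (j + 1) =
      C (((j+1).factorial : ℚ)⁻¹) * (Polynomial.bernoulli (j+1) - C (_root_.bernoulli (j+1))) →
      pInteg (phiP (j + 1)) =
      C (((j+2).factorial : ℚ)⁻¹) * (Polynomial.bernoulli (j+2) - C (_root_.bernoulli (j+2)))
      - C ((((j+1).factorial : ℚ))⁻¹ * _root_.bernoulli (j+1)) * X := by
    intro j ih
    apply pInteg_unique
    · rw [derivative_sub, derivative_mul, derivative_C, derivative_sub, derivative_C,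
        show j + 2 = (j+1) + 1 from rfl,
        Polynomial.derivative_bernoulli_add_one, derivative_mul, derivative_C, derivative_X, ih]
      have hc : (((j+1:ℕ)):ℚ[X]) + 1 = Polynomial.C ((j:ℚ)+2) := by
        rw [map_add, Polynomial.C_eq_natCast, show ((2:ℚ)) = ((2:ℕ):ℚ) by norm_num,
          Polynomial.C_eq_natCast]; push_cast; ring
      have hfac : (((j+1)+1).factorial : ℚ) = ((j:ℚ)+2) * (j+1).factorial := by
        rw [Nat.factorial_succ]; push_cast; ring
      rw [hc, hfac, mul_inv]
      have hne : ((j:ℚ)+2) ≠ 0 := by positivity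
      have key2 : Polynomial.C ((((j:ℚ)+2))⁻¹ * (((j+1).factorial:ℚ))⁻¹) *
          (Polynomial.C ((j:ℚ)+2) * Polynomial.bernoulli (j+1) - 0) =
          Polynomial.C ((((j+1).factorial:ℚ))⁻¹) * Polynomial.bernoulli (j+1) := by
        rw [sub_zero, ← mul_assoc, ← map_mul]
        congr 2
        field_simp
      rw [key2, map_mul, mul_sub]
      ring
    · simp [Polynomial.bernoulli_eval_zero]
  intro j
  induction j with
  | zero =>
    have h1 : phiP 1 = C (((1).factorial : ℚ)⁻¹) *
        (Polynomial.bernoulli 1 - C (_root_.bernoulli 1)) := by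
      show Polynomial.X = _
      have hb1 : Polynomial.bernoulli 1 = Polynomial.X - Polynomial.C (1/2) := by
        simp [Polynomial.bernoulli, Finset.sum_range_succ]
        rw [Polynomial.monomial_one_one_eq_X]
        norm_num
        ring
      rw [hb1, _root_.bernoulli_one, Nat.factorial_one,
        show ((-1:ℚ)/2) = -(1/2) by norm_num, map_neg]
      simp
    exact ⟨h1, key 0 h1⟩
  | succ j ih =>
    have hI01 : pInt01 (phiP (j+1)) = -((((j+1).factorial : ℚ))⁻¹ * _root_.bernoulli (j+1)) := by
      rw [pInt01, ih.2]
      simp only [Polynomial.eval_sub, Polynomial.eval_mul, Polynomial.eval_C, Polynomial.eval_X,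
        Polynomial.bernoulli_eval_one, mul_one]
      rw [← _root_.bernoulli_eq_bernoulli'_of_ne_one (by omega : j+2 ≠ 1)]
      ring
    have h1 : phiP (j + 2) = C (((j+2).factorial : ℚ)⁻¹) *
        (Polynomial.bernoulli (j+2) - C (_root_.bernoulli (j+2))) := by
      rw [show phiP (j+2) = pInteg (phiP (j+1)) - C (pInt01 (phiP (j+1))) * X from rfl,
        ih.2, hI01, map_neg]
      ring
    exact ⟨h1, key (j+1) h1⟩

/-- `I_j = ∫₀¹ φ_j(t) dt` equals `−B_j/j!`, where `B_j` is the `j`-th Bernoulli number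
(with the convention `Σ_{n≥0} B_n xⁿ/n! = x/(eˣ−1)`, so `B₁ = −1/2`). -/
theorem statement8 (j : ℕ) (hj : 1 ≤ j) :
    pInt01 (phiP j) = - bernoulli j / (j.factorial : ℚ) := by
  obtain ⟨k, rfl⟩ := Nat.exists_eq_add_of_le hj
  rw [Nat.add_comm]
  rw [pInt01, (phiP_closed k).2]
  simp only [Polynomial.eval_sub, Polynomial.eval_mul, Polynomial.eval_C, Polynomial.eval_X,
    Polynomial.bernoulli_eval_one, mul_one]
  rw [← _root_.bernoulli_eq_bernoulli'_of_ne_one (by omega : k+2 ≠ 1)]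
  ring
end
end

section
/- Define polynomials φ_j(t), ψ_j(t) ∈ ℚ[t] recursively by φ₁(t) = t, φ_{j+1}(t) = ∫₀^t φ_j(s) ds − t·∫₀¹ φ_j(s) ds, and ψ₁(t) = 1 − t, ψ_{j+1}(t) = ∫₀^t ψ_j(s) ds − t·∫₀¹ ψ_j(s) ds. Then ψ_j(t) = −φ_j(t) for every j ≥ 2; consequently ∫₀¹ ψ_j(t) dt = B_j/j! for every j ≥ 2, where B_j is the j-th Bernoulli number. -/
noncomputable section

/-- The polynomials `ψ_j`: `ψ₁(t) = 1 − t`,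
`ψ_{j+1}(t) = ∫₀ᵗ ψ_j(s) ds − t·∫₀¹ ψ_j(s) ds`. -/
def psiP : ℕ → Polynomial ℚ
  | 0 => 0
  | 1 => 1 - Polynomial.X
  | (j + 2) => pInteg (psiP (j + 1)) - Polynomial.C (pInt01 (psiP (j + 1))) * Polynomial.X

open Polynomial in
lemma pInteg_monomial (n : ℕ) (a : ℚ) :
    pInteg (monomial n a) = C (a / ((n : ℚ) + 1)) * X ^ (n + 1) := by
  unfold pInteg
  rw [Polynomial.sum_monomial_index]
  simp

lemma pInteg_add (p q : Polynomial ℚ) : pInteg (p + q) = pInteg p + pInteg q := by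
  unfold pInteg
  rw [Polynomial.sum_add_index] <;> intros <;> simp [add_div, add_mul]

lemma pInteg_zero : pInteg 0 = 0 := by unfold pInteg; simp [Polynomial.sum_zero_index]

lemma pInteg_neg (p : Polynomial ℚ) : pInteg (-p) = -pInteg p := by
  have := pInteg_add p (-p)
  simp [pInteg_zero] at this
  linear_combination -this

lemma pInt01_neg (p : Polynomial ℚ) : pInt01 (-p) = -pInt01 p := by
  simp [pInt01, pInteg_neg]

open Polynomial in
lemma pInteg_derivative (q : Polynomial ℚ) :
    pInteg (derivative q) = q - C (q.coeff 0) := by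
  induction q using Polynomial.induction_on' with
  | add p q hp hq =>
      rw [derivative_add, pInteg_add, hp, hq]
      simp; ring
  | monomial n a =>
      cases n with
      | zero => simp [pInteg_zero, Polynomial.monomial_zero_left]
      | succ n =>
          rw [derivative_monomial, pInteg_monomial]
          have h : ((n:ℚ)+1) ≠ 0 := by positivity
          push_cast
          simp [Polynomial.coeff_monomial, mul_div_assoc, div_self h,
            C_mul_X_pow_eq_monomial]

open Polynomial in
lemma pInteg_of_deriv (p q : Polynomial ℚ) (h : derivative q = p) (h0 : q.coeff 0 = 0) :
    pInteg p = q := by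
  rw [← h, pInteg_derivative, h0, map_zero, sub_zero]

open Polynomial in
lemma pInteg_qj (j : ℕ) :
    pInteg (C ((j.factorial : ℚ)⁻¹) * (Polynomial.bernoulli j - C (_root_.bernoulli j)))
      = C (((j+1).factorial : ℚ)⁻¹) * (Polynomial.bernoulli (j+1) - C (_root_.bernoulli (j+1)))
        - C (_root_.bernoulli j / (j.factorial : ℚ)) * X := by
  apply pInteg_of_deriv
  · simp only [derivative_sub, derivative_mul, derivative_C, derivative_X,
      Polynomial.derivative_bernoulli_add_one, zero_mul, zero_add, mul_one, mul_zero, sub_zero]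
    have e1 : ((j : ℚ[X]) + 1) = C ((j:ℚ)+1) := by
      rw [map_add, map_one, Polynomial.C_eq_natCast]
    have hf' : C (((j+1).factorial : ℚ))⁻¹ * C ((j:ℚ)+1) = C ((j.factorial : ℚ))⁻¹ := by
      rw [← map_mul]
      congr 1
      rw [Nat.factorial_succ]
      push_cast
      field_simp
    have hdiv : C (_root_.bernoulli j / (j.factorial:ℚ))
        = C ((j.factorial:ℚ))⁻¹ * C (_root_.bernoulli j) := by
      rw [← map_mul, div_eq_inv_mul]
    push_cast [e1]
    rw [hdiv]
    linear_combination (Polynomial.bernoulli j) * hf'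
  · rw [Polynomial.coeff_zero_eq_eval_zero]
    simp

open Polynomial in
lemma phiP_eq (j : ℕ) (hj : 1 ≤ j) :
    phiP j = C ((j.factorial : ℚ)⁻¹) * (Polynomial.bernoulli j - C (_root_.bernoulli j)) := by
  induction j, hj using Nat.le_induction with
  | base =>
      show (X : Polynomial ℚ) = _
      simp [Polynomial.bernoulli, Finset.sum_range_succ, _root_.bernoulli_one,
        Polynomial.monomial_one_one_eq_X, ← Polynomial.C_eq_natCast]
  | succ j hj ih =>
      obtain ⟨k, rfl⟩ := Nat.exists_eq_add_of_le' hj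
      show pInteg (phiP (k+1)) - C (pInt01 (phiP (k+1))) * X = _
      have h1 : pInt01 (phiP (k+1)) = -(_root_.bernoulli (k+1) / ((k+1).factorial : ℚ)) := by
        rw [pInt01, ih, pInteg_qj]
        have hne : k + 1 + 1 ≠ 1 := by omega
        simp [bernoulli_eq_bernoulli'_of_ne_one hne]
      rw [h1, ih, pInteg_qj, map_neg]
      ring

lemma pInt01_phi (j : ℕ) (hj : 1 ≤ j) :
    pInt01 (phiP j) = -(_root_.bernoulli j / (j.factorial : ℚ)) := by
  rw [pInt01, phiP_eq j hj, pInteg_qj]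
  have hne : j + 1 ≠ 1 := by omega
  simp [bernoulli_eq_bernoulli'_of_ne_one hne]

open Polynomial in
lemma psiP_eq (j : ℕ) (hj : 2 ≤ j) : psiP j = -phiP j := by
  induction j, hj using Nat.le_induction with
  | base =>
      show pInteg (psiP 1) - C (pInt01 (psiP 1)) * X
        = -(pInteg (phiP 1) - C (pInt01 (phiP 1)) * X)
      have h1 : (psiP 1 : Polynomial ℚ) = monomial 0 1 + monomial 1 (-1) := by
        show (1 - X : Polynomial ℚ) = _
        simp [Polynomial.monomial_zero_left, Polynomial.monomial_one_one_eq_X]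
        ring
      have h2 : (phiP 1 : Polynomial ℚ) = monomial 1 1 := by
        show (X : Polynomial ℚ) = _
        simp [Polynomial.monomial_one_one_eq_X]
      rw [h1, h2, pInt01, pInt01, pInteg_add, pInteg_monomial, pInteg_monomial,
        pInteg_monomial]
      norm_num
      have hC : (C (1/2 : ℚ) : Polynomial ℚ) + C (1/2 : ℚ) = 1 := by
        rw [← map_add]; norm_num
      linear_combination -X * hC
  | succ j hj ih =>
      obtain ⟨k, rfl⟩ := Nat.exists_eq_add_of_le' hj
      show pInteg (psiP (k+2)) - C (pInt01 (psiP (k+2))) * X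
        = -(pInteg (phiP (k+2)) - C (pInt01 (phiP (k+2))) * X)
      rw [ih, pInteg_neg, pInt01_neg, map_neg]
      ring

/-- `ψ_j = −φ_j` for every `j ≥ 2`; consequently `∫₀¹ ψ_j(t) dt = B_j/j!` for every `j ≥ 2`,
where `B_j` is the `j`-th Bernoulli number (convention `Σ_{n≥0} B_n xⁿ/n! = x/(eˣ−1)`). -/
theorem statement9 (j : ℕ) (hj : 2 ≤ j) :
    psiP j = - phiP j ∧ pInt01 (psiP j) = bernoulli j / (j.factorial : ℚ) := by
  refine ⟨psiP_eq j hj, ?_⟩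
  rw [psiP_eq j hj, pInt01_neg, pInt01_phi j (by omega), neg_neg]
end
end

section
/- Let h: L → M and g: N → M be morphisms of DGLAs and endow the cone C_{(h,g)} with the transferred L∞-algebra brackets ⟨ ⟩_n defined by the explicit tree formula via ι, π, K. Then for every n ≥ 3, the bracket ⟨γ₁ ⊙ ⋯ ⊙ γ_n⟩_n vanishes on all n-tuples of homogeneous elements of C_{(h,g)} = L ⊕ N ⊕ M[−1] except on (linear combinations of) tuples consisting of j = n−1 elements of M together with one element of L, or of j = n−1 elements of M together with one element of N; i.e., the only possibly nonzero higher products are ⟨m₁ ⊙ ⋯ ⊙ m_{n−1} ⊙ l⟩_n and ⟨m₁ ⊙ ⋯ ⊙ m_{n−1} ⊙ n⟩_n with m_i ∈ M, l ∈ L, n ∈ N. -/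
noncomputable section

open TensorProduct

section Cone

variable (X Y Z : GLD) (hf : ∀ i, X.V i → Z.V i) (gf : ∀ i, Y.V i → Z.V i)

/-- Degree `δ` part of the shifted mapping cone `C_{(h,g)}[1]`:
`C[1]^δ = L^{δ+1} × N^{δ+1} × M^δ`. -/
abbrev ConeSh (δ : ℤ) : Type := X.V (δ + 1) × Y.V (δ + 1) × Z.V δ

/-- Degree `δ` part of the shifted ambient space of `H_{(h,g)}[1]`:
`L^{δ+1} × N^{δ+1} × M[t,dt]^{δ+1}`. -/
abbrev HSh (δ : ℤ) : Type := X.V (δ + 1) × Y.V (δ + 1) × (Z.tdt).V (δ + 1)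

/-- Transport of cone elements along a degree equality. -/
def coneTr {δ δ' : ℤ} (e : δ = δ') (w : ConeSh X Y Z δ) : ConeSh X Y Z δ' :=
  (X.tr (by omega) w.1, Y.tr (by omega) w.2.1, Z.tr e w.2.2)

/-- Transport of ambient `H[1]` elements along a degree equality. -/
def hshTr {δ δ' : ℤ} (e : δ = δ') (w : HSh X Y Z δ) : HSh X Y Z δ' :=
  (X.tr (by omega) w.1, Y.tr (by omega) w.2.1, (Z.tdt).tr (by omega) w.2.2)

/-- The suspended differential `q₁` of the cone:
`⟨(l,n,m)⟩₁ = (−dl, −dn, dm + g(n) − h(l))`. -/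
def coneQ1 (δ : ℤ) (w : ConeSh X Y Z δ) : ConeSh X Y Z (δ + 1) :=
  (- X.d (δ + 1) w.1, - Y.d (δ + 1) w.2.1,
    Z.d δ w.2.2 + gf (δ + 1) w.2.1 - hf (δ + 1) w.1)

/-- The suspended differential `q₁` of (the ambient space of) `H_{(h,g)}[1]`. -/
def hshQ1 (δ : ℤ) (w : HSh X Y Z δ) : HSh X Y Z (δ + 1) :=
  (- X.d (δ + 1) w.1, - Y.d (δ + 1) w.2.1, - (Z.tdt).d (δ + 1) w.2.2)

/-- The membership conditions cutting out `H_{(h,g)}[1]` inside the ambient space: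
`h(l) = e₁(m)` and `g(n) = e₀(m)`. -/
def hshMem (δ : ℤ) (w : HSh X Y Z δ) : Prop :=
  hf (δ + 1) w.1 = Z.evalT 1 (δ + 1) w.2.2 ∧ gf (δ + 1) w.2.1 = Z.evalT 0 (δ + 1) w.2.2

/-- The map `ι : C_{(h,g)}[1] → H_{(h,g)}[1]`,
`ι(l,n,m) = (l, n, (1−t)·g(n) + t·h(l) + dt·m)`. -/
def iotaC (δ : ℤ) (w : ConeSh X Y Z δ) : HSh X Y Z δ :=
  (w.1, w.2.1,
    (Finsupp.single 0 (gf (δ + 1) w.2.1) + Finsupp.single 1 (hf (δ + 1) w.1 - gf (δ + 1) w.2.1),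
     Finsupp.single 0 (Z.tr (show δ = (δ + 1) - 1 by omega) w.2.2)))

/-- The map `π : H_{(h,g)}[1] → C_{(h,g)}[1]`, `π(l, n, m(t,dt)) = (l, n, ∫₀¹ m)`. -/
def piC (δ : ℤ) (w : HSh X Y Z δ) : ConeSh X Y Z δ :=
  (w.1, w.2.1, Z.tr (show (δ + 1) - 1 = δ by omega) (Z.int01 (δ + 1) w.2.2))

/-- The contracting homotopy `K : H_{(h,g)}[1] → H_{(h,g)}[1]` of degree `−1`,
`K(l, n, m(t,dt)) = (0, 0, t·∫₀¹ m − ∫₀ᵗ m)`. -/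
def KC (δ : ℤ) (w : HSh X Y Z δ) : HSh X Y Z (δ - 1) :=
  (0, 0, (Z.tdt).tr (show (δ + 1) - 1 = (δ - 1) + 1 by omega) (Z.Ktdt (δ + 1) w.2.2))

/-- The suspended bracket `q₂(v ⊙ w) = (−1)^{deg v}[v, w]` of (the ambient space of)
`H_{(h,g)}`, as a degree `+1` operation in the shifted grading. -/
def hshQ2 (p q : ℤ) (v : HSh X Y Z p) (w : HSh X Y Z q) : HSh X Y Z (p + q + 1) :=
  ((Int.negOnePow (p + 1) : ℤˣ) : ℤ) •
    (X.tr (show (p+1) + (q+1) = (p+q+1) + 1 by omega) (X.br (p + 1) (q + 1) v.1 w.1),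
     Y.tr (show (p+1) + (q+1) = (p+q+1) + 1 by omega) (Y.br (p + 1) (q + 1) v.2.1 w.2.1),
     (Z.tdt).tr (show (p+1) + (q+1) = (p+q+1) + 1 by omega)
       ((Z.tdt).br (p + 1) (q + 1) v.2.2 w.2.2))

/-- The iterated expression `K q₂(ι γ₁ ⊙ K q₂(ι γ₂ ⊙ ⋯ ⊙ K q₂(ι γ_{k-1} ⊙ ι γ_k)⋯))`
appearing in the homotopy transfer tree formula. -/
def innerNest : List (Σ δ : ℤ, ConeSh X Y Z δ) → Σ δ : ℤ, HSh X Y Z δ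
  | [] => ⟨0, 0⟩
  | [γ] => ⟨γ.1, iotaC X Y Z hf gf γ.1 γ.2⟩
  | γ :: γ' :: rest =>
    let r := innerNest (γ' :: rest)
    ⟨γ.1 + r.1, hshTr X Y Z (show (γ.1 + r.1 + 1) - 1 = γ.1 + r.1 by omega)
      (KC X Y Z (γ.1 + r.1 + 1) (hshQ2 X Y Z γ.1 r.1 (iotaC X Y Z hf gf γ.1 γ.2) r.2))⟩

theorem innerNest_deg (l : List (Σ δ : ℤ, ConeSh X Y Z δ)) :
    (innerNest X Y Z hf gf l).1 = (l.map Sigma.fst).sum := by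
  induction l with
  | nil => simp [innerNest]
  | cons γ rest ih =>
    cases rest with
    | nil => simp [innerNest]
    | cons γ' r => rw [List.map_cons, List.sum_cons, ← ih]; rfl

/-- The Koszul sign `ε(σ)` of a permutation acting on graded elements of degrees `δ`. -/
def koszulSign {n : ℕ} (δ : Fin n → ℤ) (σ : Equiv.Perm (Fin n)) : ℤ :=
  ∏ p ∈ Finset.univ.filter (fun p : Fin n × Fin n => p.1 < p.2 ∧ σ p.2 < σ p.1),
    ((Int.negOnePow (δ (σ p.1) * δ (σ p.2)) : ℤˣ) : ℤ)

/-- The transferred `L_∞` brackets on the cone `C_{(h,g)}`, given by the explicit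
rooted-tree formula
`⟨γ₁⊙⋯⊙γ_n⟩_n = ((−1)^{n−2}/2)·Σ_{σ∈Σ_n} ε(σ)·π q₂(ι γ_{σ(1)} ⊙ K q₂(ι γ_{σ(2)} ⊙ ⋯ ⊙
K q₂(ι γ_{σ(n−1)} ⊙ ι γ_{σ(n)})⋯))` (for `n ≥ 2`). -/
def transferBr {n : ℕ} (γ : Fin (n + 2) → Σ δ : ℤ, ConeSh X Y Z δ) :
    ConeSh X Y Z ((∑ i, (γ i).1) + 1) :=
  ((-1 : ℂ) ^ n * (2 : ℂ)⁻¹) •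
    ∑ σ : Equiv.Perm (Fin (n + 2)),
      (koszulSign (fun i => (γ i).1) σ) •
        coneTr X Y Z
          (by
            have h1 : ((List.ofFn fun i : Fin (n+1) => γ (σ i.succ)).map Sigma.fst).sum
                = ∑ i : Fin (n+1), (γ (σ i.succ)).1 := by
              rw [List.map_ofFn, List.sum_ofFn]; rfl
            have h2 : ∑ i : Fin (n+2), (γ (σ i)).1 = ∑ i : Fin (n+2), (γ i).1 :=
              Equiv.sum_comp σ (fun i => (γ i).1)
            have h3 : ∑ i : Fin (n+2), (γ (σ i)).1
                = (γ (σ 0)).1 + ∑ i : Fin (n+1), (γ (σ i.succ)).1 :=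
              Fin.sum_univ_succ _
            rw [innerNest_deg, h1]
            omega)
          (piC X Y Z _
            (hshQ2 X Y Z (γ (σ 0)).1
              (innerNest X Y Z hf gf (List.ofFn fun i : Fin (n+1) => γ (σ i.succ))).1
              (iotaC X Y Z hf gf (γ (σ 0)).1 (γ (σ 0)).2)
              (innerNest X Y Z hf gf (List.ofFn fun i : Fin (n+1) => γ (σ i.succ))).2))

end Cone

section S13

variable (L M N : DGLA)

/-- An element of the cone concentrated in the `M`-component, i.e. of the form `(0,0,m)`. -/
def pureM {δ : ℤ} (w : ConeSh L.toGLD N.toGLD M.toGLD δ) : Prop :=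
  w.1 = 0 ∧ w.2.1 = 0

/-- An element of the cone concentrated in the `L`-component, i.e. of the form `(l,0,0)`. -/
def pureL {δ : ℤ} (w : ConeSh L.toGLD N.toGLD M.toGLD δ) : Prop :=
  w.2.1 = 0 ∧ w.2.2 = 0

/-- An element of the cone concentrated in the `N`-component, i.e. of the form `(0,n,0)`. -/
def pureN {δ : ℤ} (w : ConeSh L.toGLD N.toGLD M.toGLD δ) : Prop :=
  w.1 = 0 ∧ w.2.2 = 0

/-!
Inside `M[t,dt]` every leaf `ι γ` of the tree formula is homogeneous in `dt`: of degree `1` if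
`γ ∈ M` and of degree `0` if `γ ∈ L` or `γ ∈ N`. The bracket adds these degrees (`dt ∧ dt = 0`
kills degree `2`), each homotopy `K` lowers the degree by one (and kills degree `0`), and `π`
only reads the `dt`-component, while the `L`- and `N`-components of the root vanish because `K`
has none. A tree with `k` leaves contains `k − 2` homotopies, so its value can be nonzero only
if the leaves have total degree `k − 1`, i.e. exactly `k − 1` of them lie in `M`.
-/

namespace GLD

theorem tr_zero (W : GLD) {i j : ℤ} (e : i = j) : W.tr e 0 = 0 := by
  subst e; rfl

variable (W : GLD)

/-- Homogeneity of degree `k` in `dt`; for `k ∉ {0, 1}` it forces `x = 0`, which lets `K`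
lower the degree by one without exception. -/
def IsFormDegree {n : ℤ} (k : ℤ) (x : W.tdt.V n) : Prop :=
  (k ≠ 0 → x.1 = 0) ∧ (k ≠ 1 → x.2 = 0)

variable {W}

theorem IsFormDegree.tr {n n' : ℤ} {k : ℤ} {x : W.tdt.V n} (hx : W.IsFormDegree k x)
    (e : n = n') : W.IsFormDegree k (W.tdt.tr e x) := by
  subst e; exact hx

theorem IsFormDegree.zsmul {n k : ℤ} {x : W.tdt.V n} (hx : W.IsFormDegree k x) (c : ℤ) :
    W.IsFormDegree k (c • x) :=
  ⟨fun hk => show c • x.1 = 0 by rw [hx.1 hk, smul_zero],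
    fun hk => show c • x.2 = 0 by rw [hx.2 hk, smul_zero]⟩

theorem IsFormDegree.br {n m a b : ℤ} {x : W.tdt.V n} {y : W.tdt.V m}
    (hx : W.IsFormDegree a x) (hy : W.IsFormDegree b y) :
    W.IsFormDegree (a + b) (W.tdt.br n m x y) := by
  dsimp only [GLD.tdt]
  constructor
  · intro hab
    have h : x.1 = 0 ∨ y.1 = 0 := by
      by_cases ha : a = 0
      · exact .inr (hy.1 (by omega))
      · exact .inl (hx.1 ha)
    rcases h with h | h <;> simp [h]
  · intro hab
    have h₁ : x.1 = 0 ∨ y.2 = 0 := by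
      by_cases ha : a = 0
      · exact .inr (hy.2 (by omega))
      · exact .inl (hx.1 ha)
    have h₂ : x.2 = 0 ∨ y.1 = 0 := by
      by_cases ha : a = 1
      · exact .inr (hy.1 (by omega))
      · exact .inl (hx.2 ha)
    rcases h₁ with h₁ | h₁ <;> rcases h₂ with h₂ | h₂ <;> simp [h₁, h₂]

theorem IsFormDegree.Ktdt {n k : ℤ} {x : W.tdt.V n} (hx : W.IsFormDegree k x) :
    W.IsFormDegree (k - 1) (W.Ktdt n x) := by
  refine ⟨fun hk => ?_, fun _ => rfl⟩
  show Finsupp.single 1 (W.int01 n x) - W.int0t n x = 0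
  simp [GLD.int01, GLD.int0t, hx.2 (by omega)]

theorem int01_eq_zero_of_isFormDegree {n k : ℤ} {x : W.tdt.V n} (hx : W.IsFormDegree k x)
    (hk : k ≠ 1) : W.int01 n x = 0 := by
  simp [GLD.int01, hx.2 hk]

end GLD

theorem DGLA.br_zero_right (A : DGLA) (i j : ℤ) (x : A.V i) : A.br i j x 0 = 0 :=
  map_zero (A.brLin i j x)

theorem GLDHom.map_zero {A B : GLD} (φ : GLDHom A B) (i : ℤ) : φ.f i 0 = 0 :=
  _root_.map_zero (φ.lin i)

section Cone

variable {X Y Z : GLD} {hf : ∀ i, X.V i → Z.V i} {gf : ∀ i, Y.V i → Z.V i}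

theorem coneTr_zero {δ δ' : ℤ} (e : δ = δ') : coneTr X Y Z e 0 = 0 := by
  subst e; rfl

theorem iotaC_isFormDegree_zero {δ : ℤ} {w : ConeSh X Y Z δ} (hw : w.2.2 = 0) :
    Z.IsFormDegree 0 (iotaC X Y Z hf gf δ w).2.2 :=
  ⟨absurd rfl, fun _ => show Finsupp.single 0 (Z.tr _ w.2.2) = 0 by
    rw [hw, GLD.tr_zero, Finsupp.single_zero]⟩

theorem iotaC_isFormDegree_one {A B : GLD} (h : GLDHom A Z) (g : GLDHom B Z) {δ : ℤ}
    {w : ConeSh A B Z δ} (hw₁ : w.1 = 0) (hw₂ : w.2.1 = 0) :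
    Z.IsFormDegree 1 (iotaC A B Z h.f g.f δ w).2.2 :=
  ⟨fun _ => show Finsupp.single 0 (g.f _ w.2.1) + Finsupp.single 1 (h.f _ w.1 - g.f _ w.2.1) = 0
    by simp [hw₁, hw₂, GLDHom.map_zero], absurd rfl⟩

theorem hshQ2_isFormDegree {p q a b : ℤ} {v : HSh X Y Z p} {w : HSh X Y Z q}
    (hv : Z.IsFormDegree a v.2.2) (hw : Z.IsFormDegree b w.2.2) :
    Z.IsFormDegree (a + b) (hshQ2 X Y Z p q v w).2.2 :=
  ((hv.br hw).tr _).zsmul _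

theorem hshQ2_fst_eq_zero {A B : DGLA} {p q : ℤ} (v : HSh A.toGLD B.toGLD Z p)
    {w : HSh A.toGLD B.toGLD Z q} (hw : w.1 = 0) :
    (hshQ2 A.toGLD B.toGLD Z p q v w).1 = 0 := by
  show ((p + 1).negOnePow : ℤ) • A.tr _ (A.br (p + 1) (q + 1) v.1 w.1) = 0
  rw [hw, DGLA.br_zero_right, GLD.tr_zero, smul_zero]

theorem hshQ2_snd_fst_eq_zero {A B : DGLA} {p q : ℤ} (v : HSh A.toGLD B.toGLD Z p)
    {w : HSh A.toGLD B.toGLD Z q} (hw : w.2.1 = 0) :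
    (hshQ2 A.toGLD B.toGLD Z p q v w).2.1 = 0 := by
  show ((p + 1).negOnePow : ℤ) • B.tr _ (B.br (p + 1) (q + 1) v.2.1 w.2.1) = 0
  rw [hw, DGLA.br_zero_right, GLD.tr_zero, smul_zero]

theorem piC_eq_zero_of_isFormDegree {δ k : ℤ} {w : HSh X Y Z δ} (h₁ : w.1 = 0) (h₂ : w.2.1 = 0)
    (hw : Z.IsFormDegree k w.2.2) (hk : k ≠ 1) : piC X Y Z δ w = 0 := by
  show (w.1, w.2.1, Z.tr _ (Z.int01 (δ + 1) w.2.2)) = 0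
  rw [h₁, h₂, GLD.int01_eq_zero_of_isFormDegree hw hk, GLD.tr_zero]
  rfl

theorem KC_isFormDegree {δ k : ℤ} {w : HSh X Y Z δ} (hw : Z.IsFormDegree k w.2.2) :
    Z.IsFormDegree (k - 1) (KC X Y Z δ w).2.2 :=
  hw.Ktdt.tr _

theorem hshTr_isFormDegree {δ δ' k : ℤ} (e : δ = δ') {w : HSh X Y Z δ}
    (hw : Z.IsFormDegree k w.2.2) : Z.IsFormDegree k (hshTr X Y Z e w).2.2 :=
  hw.tr _

variable (X Y Z hf gf)

theorem innerNest_cons_cons_fst (a b : Σ δ : ℤ, ConeSh X Y Z δ)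
    (rest : List (Σ δ : ℤ, ConeSh X Y Z δ)) :
    (innerNest X Y Z hf gf (a :: b :: rest)).2.1 = 0 :=
  X.tr_zero _

theorem innerNest_cons_cons_snd_fst (a b : Σ δ : ℤ, ConeSh X Y Z δ)
    (rest : List (Σ δ : ℤ, ConeSh X Y Z δ)) :
    (innerNest X Y Z hf gf (a :: b :: rest)).2.2.1 = 0 :=
  Y.tr_zero _

theorem innerNest_isFormDegree (d : (Σ δ : ℤ, ConeSh X Y Z δ) → ℤ)
    (l : List (Σ δ : ℤ, ConeSh X Y Z δ)) (hl : l ≠ [])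
    (hd : ∀ a ∈ l, Z.IsFormDegree (d a) (iotaC X Y Z hf gf a.1 a.2).2.2) :
    Z.IsFormDegree ((l.map d).sum - (l.length - 1)) (innerNest X Y Z hf gf l).2.2.2 := by
  induction l with
  | nil => exact absurd rfl hl
  | cons a rest ih =>
    cases rest with
    | nil => simpa [innerNest] using hd a (by simp)
    | cons b rest =>
      have hrest := ih (by simp) fun c hc => hd c (List.mem_cons_of_mem a hc)
      have hdeg : ((a :: b :: rest).map d).sum - ((a :: b :: rest).length - 1 : ℤ)
          = d a + (((b :: rest).map d).sum - ((b :: rest).length - 1)) - 1 := by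
        simp only [List.map_cons, List.sum_cons, List.length_cons, Nat.cast_add, Nat.cast_one]
        ring
      rw [hdeg]
      exact hshTr_isFormDegree (by omega)
        (KC_isFormDegree (hshQ2_isFormDegree (hd a (by simp)) hrest))

end Cone

theorem exists_forall_ne_of_card_filter_add_one {α : Type*} [Fintype α] (P : α → Prop)
    [DecidablePred P] (h : (Finset.univ.filter P).card + 1 = Fintype.card α) :
    ∃ a, ¬ P a ∧ ∀ b, b ≠ a → P b := by
  have hcard : (Finset.univ.filter fun a => ¬ P a).card = 1 := by
    have := Finset.card_filter_add_card_filter_not (s := Finset.univ) P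
    rw [Finset.card_univ] at this
    omega
  obtain ⟨a, ha⟩ := Finset.card_eq_one.mp hcard
  refine ⟨a, by simpa using ha.ge (Finset.mem_singleton_self a), fun b hb => ?_⟩
  by_contra hPb
  exact hb (Finset.mem_singleton.mp (ha ▸ Finset.mem_filter.mpr ⟨Finset.mem_univ b, hPb⟩))

section TreeFormula

variable {A B : DGLA} {Z : GLD} {hf : ∀ i, A.V i → Z.V i} {gf : ∀ i, B.V i → Z.V i}

theorem piC_hshQ2_iotaC_innerNest_eq_zero (d : (Σ δ : ℤ, ConeSh A.toGLD B.toGLD Z δ) → ℤ)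
    (a : Σ δ : ℤ, ConeSh A.toGLD B.toGLD Z δ)
    (l : List (Σ δ : ℤ, ConeSh A.toGLD B.toGLD Z δ))
    (hl : 2 ≤ l.length)
    (hd : ∀ x ∈ a :: l, Z.IsFormDegree (d x) (iotaC A.toGLD B.toGLD Z hf gf x.1 x.2).2.2)
    (hdeg : ((a :: l).map d).sum - (l.length - 1) ≠ 1) :
    piC A.toGLD B.toGLD Z _ (hshQ2 A.toGLD B.toGLD Z a.1 (innerNest A.toGLD B.toGLD Z hf gf l).1
      (iotaC A.toGLD B.toGLD Z hf gf a.1 a.2) (innerNest A.toGLD B.toGLD Z hf gf l).2) = 0 := by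
  obtain ⟨b, c, rest, rfl⟩ : ∃ b c rest, l = b :: c :: rest := by
    match l, hl with
    | b :: c :: rest, _ => exact ⟨b, c, rest, rfl⟩
  have hr := innerNest_isFormDegree A.toGLD B.toGLD Z hf gf d (b :: c :: rest) (by simp)
    fun x hx => hd x (List.mem_cons_of_mem a hx)
  refine piC_eq_zero_of_isFormDegree (hshQ2_fst_eq_zero _ (innerNest_cons_cons_fst ..))
    (hshQ2_snd_fst_eq_zero _ (innerNest_cons_cons_snd_fst ..))
    (hshQ2_isFormDegree (hd a (by simp)) hr) ?_
  convert hdeg using 1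
  simp only [List.map_cons, List.sum_cons, List.length_cons, Nat.cast_add, Nat.cast_one]
  ring

theorem transferBr_eq_zero_of_isFormDegree {m : ℕ}
    (γ : Fin (m + 3) → Σ δ : ℤ, ConeSh A.toGLD B.toGLD Z δ)
    (d : (Σ δ : ℤ, ConeSh A.toGLD B.toGLD Z δ) → ℤ)
    (hd : ∀ i, Z.IsFormDegree (d (γ i)) (iotaC A.toGLD B.toGLD Z hf gf (γ i).1 (γ i).2).2.2)
    (hsum : ∑ i, d (γ i) ≠ m + 2) :
    transferBr A.toGLD B.toGLD Z hf gf γ = 0 := by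
  unfold transferBr
  refine smul_eq_zero_of_right _ (Finset.sum_eq_zero fun σ _ => smul_eq_zero_of_right _ ?_)
  rw [piC_hshQ2_iotaC_innerNest_eq_zero d _ _ (by simp) ?_ ?_, coneTr_zero]
  · intro x hx
    rcases List.mem_cons.mp hx with rfl | hx
    · exact hd _
    · obtain ⟨i, rfl⟩ := List.mem_ofFn.mp hx
      exact hd _
  · have hperm :
        ∑ i, d (γ i) = d (γ (σ 0)) + ∑ i : Fin (m + 1 + 1), d (γ (σ i.succ)) := by
      rw [← Equiv.sum_comp σ, Fin.sum_univ_succ]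
    rw [List.map_cons, List.sum_cons, List.map_ofFn, List.sum_ofFn, List.length_ofFn]
    simp only [Function.comp_def]
    omega

end TreeFormula

/-- For the transferred `L_∞` structure on the cone `C_{(h,g)} = L ⊕ N ⊕ M[−1]`
(defined by the explicit rooted-tree formula via `ι`, `π`, `K`), all higher brackets
`⟨γ₁ ⊙ ⋯ ⊙ γ_k⟩_k` with `k ≥ 3` vanish on tuples of elements each lying in `L`, `N` or
`M`, except possibly on tuples consisting of `k−1` elements of `M` together with a single
element of `L` or of `N`. -/
theorem statement13 (h : GLDHom L.toGLD M.toGLD) (g : GLDHom N.toGLD M.toGLD)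
    (n : ℕ) (γ : Fin (n + 3) → Σ δ : ℤ, ConeSh L.toGLD N.toGLD M.toGLD δ)
    (hpure : ∀ i, pureL L M N (γ i).2 ∨ pureN L M N (γ i).2 ∨ pureM L M N (γ i).2)
    (hnot : ¬ ∃ i₀, (pureL L M N (γ i₀).2 ∨ pureN L M N (γ i₀).2) ∧
      ∀ i, i ≠ i₀ → pureM L M N (γ i).2) :
    transferBr L.toGLD N.toGLD M.toGLD h.f g.f γ = 0 := by
  classical
  -- elements of `M` enter the tree as `dt`-forms, elements of `L` and `N` as functions of `t`
  let d : (Σ δ : ℤ, ConeSh L.toGLD N.toGLD M.toGLD δ) → ℤ :=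
    fun x => if pureM L M N x.2 then 1 else 0
  refine transferBr_eq_zero_of_isFormDegree γ d (fun i => ?_) fun hsum => hnot ?_
  · by_cases hi : pureM L M N (γ i).2
    · simpa only [d, if_pos hi] using iotaC_isFormDegree_one h g hi.1 hi.2
    · have hM : (γ i).2.2.2 = 0 := by
        rcases hpure i with hL | hN | hM
        exacts [hL.2, hN.2, absurd hM hi]
      simpa only [d, if_neg hi] using iotaC_isFormDegree_zero hM
  · have hcard : (Finset.univ.filter fun i => pureM L M N (γ i).2).card + 1 = n + 3 := by
      have := Finset.sum_boole (s := Finset.univ) (p := fun i => pureM L M N (γ i).2) (R := ℤ)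
      simp only [d] at hsum
      omega
    obtain ⟨i₀, hi₀, hM⟩ :=
      exists_forall_ne_of_card_filter_add_one (fun i => pureM L M N (γ i).2)
        (by rwa [Fintype.card_fin])
    exact ⟨i₀, (hpure i₀).imp_right (Or.resolve_right · hi₀), hM⟩

end S13
end
end
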